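/- arXiv:0907.3332 — 2 statements merged into one kernel-verified Lean document; each statement's English description precedes it below -/
import Mathlib

section
/- Let F ⊆ G be lattice filters of an MV-algebra L. Then F ⊸ G = {z ∈ L | for every f ∈ F, f ⊗ z ∈ G}. -/
/-- An MV-algebra: a commutative monoid `(L, ⊕, 0)` with a unary `¬` satisfying
`¬¬x = x`, `x ⊕ ¬0 = ¬0` and `¬(¬x ⊕ y) ⊕ y = ¬(¬y ⊕ x) ⊕ x`. -/
class MV (L : Type*) where
  add : L → L → L
  zero : L
  neg : L → L
  add_assoc : ∀ x y z : L, add (add x y) z = add x (add y z)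
  add_comm : ∀ x y : L, add x y = add y x
  add_zero : ∀ x : L, add x zero = x
  neg_neg : ∀ x : L, neg (neg x) = x
  add_neg_zero : ∀ x : L, add x (neg zero) = neg zero
  luk : ∀ x y : L, add (neg (add (neg x) y)) y = add (neg (add (neg y) x)) x

namespace MV

variable {L : Type*} [MV L]

/-- `1 = ¬0`. -/
def one : L := neg zero

/-- `x → y = ¬x ⊕ y`. -/
def imp (x y : L) : L := add (neg x) y

/-- `x ⊗ y = ¬(¬x ⊕ ¬y)`. -/
def otimes (x y : L) : L := neg (add (neg x) (neg y))

/-- `x ∨ y = (x → y) → y`. -/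
def join (x y : L) : L := imp (imp x y) y

/-- `x ∧ y = ¬(¬x ∨ ¬y)`. -/
def meet (x y : L) : L := neg (join (neg x) (neg y))

/-- `x ≤ y` iff `x → y = 1`. -/
def le (x y : L) : Prop := imp x y = one

/-- `x < y` iff `x ≤ y` and `x ≠ y`. -/
def lt (x y : L) : Prop := le x y ∧ x ≠ y

/-- A lattice filter: nonempty, upward closed, closed under `∧`. -/
def IsLatticeFilter (F : Set L) : Prop :=
  F.Nonempty ∧ (∀ x y : L, x ∈ F → le x y → y ∈ F) ∧
    (∀ x y : L, x ∈ F → y ∈ F → meet x y ∈ F)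

/-- A prime lattice filter: a proper lattice filter such that
`x ∨ y ∈ F` implies `x ∈ F` or `y ∈ F`. -/
def IsPrimeFilter (F : Set L) : Prop :=
  IsLatticeFilter F ∧ F ≠ Set.univ ∧ ∀ x y : L, join x y ∈ F → x ∈ F ∨ y ∈ F

/-- `F ⊸ G = {z | ∀ a ∉ G, z → a ∉ F}` (intended for `F ⊆ G`). -/
def lolli (F G : Set L) : Set L := {z | ∀ a ∉ G, imp z a ∉ F}

/-- The general `F ⊸ G = (F ∩ G) ⊸ G`. -/
def lolli' (F G : Set L) : Set L := lolli (F ∩ G) G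

/-- The kernel `K(F) = {z | ∀ a ∉ F, z → a ∉ F}`. -/
def ker (F : Set L) : Set L := {z | ∀ a ∉ F, imp z a ∉ F}

/-- `F⁺ = {z | ¬z ∉ F}`. -/
def plus (F : Set L) : Set L := {z | neg z ∉ F}

/-- An implication filter: contains `1` and is closed under modus ponens. -/
def IsImplicationFilter (P : Set L) : Prop :=
  (one : L) ∈ P ∧ ∀ x y : L, x ∈ P → imp x y ∈ P → y ∈ P

/-- `x ~_P y` iff `x → y ∈ P` and `y → x ∈ P`. -/
def simP (P : Set L) (x y : L) : Prop := imp x y ∈ P ∧ imp y x ∈ P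

/-- `J_u(F, P) = {z | ∃ f ∈ F, z ~_P f}`. -/
def Ju (F P : Set L) : Set L := {z | ∃ f ∈ F, simP P z f}

/-- `J_d(F, P) = (J_u(F⁺, P))⁺`. -/
def Jd (F P : Set L) : Set L := plus (Ju (plus F) P)

end MV


/-! Both inclusions are residuation in the MV-algebra together with upward closure:
`f ≤ z → f ⊗ z` puts `z → (f ⊗ z)` into `F` whenever `f ∈ F`, and `(z → a) ⊗ z ≤ a` puts `a`
into `G` whenever `(z → a) ⊗ z ∈ G`. -/

namespace MV

variable {L : Type*} [MV L]

lemma zero_add (x : L) : add zero x = x := by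
  rw [add_comm, add_zero]

lemma neg_add_self (x : L) : add (neg x) x = one := by
  simpa only [one, neg_neg, zero_add, add_neg_zero] using luk (neg (zero : L)) x

lemma add_neg_self (x : L) : add x (neg x) = one := by
  rw [add_comm, neg_add_self]

lemma le_imp_otimes (f z : L) : le f (imp z (otimes f z)) := by
  show add (neg f) (add (neg z) (neg (add (neg f) (neg z)))) = one
  rw [← add_assoc, add_neg_self]

lemma otimes_imp_le (z a : L) : le (otimes (imp z a) z) a := by
  show add (neg (neg (add (neg (add (neg z) a)) (neg z)))) a = one
  rw [neg_neg, add_assoc, neg_add_self]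

end MV

open MV

theorem stmt_0_general {L : Type*} [MV L] (F G : Set L)
    (hF : IsLatticeFilter F) (hG : IsLatticeFilter G) :
    lolli F G = {z : L | ∀ f ∈ F, otimes f z ∈ G} := by
  ext z
  constructor
  · intro hz f hf
    by_contra hfz
    exact hz _ hfz (hF.2.1 f _ hf (le_imp_otimes f z))
  · intro hz a haG hza
    exact haG (hG.2.1 _ a (hz _ hza) (otimes_imp_le z a))

/-- For lattice filters `F ⊆ G`,
`F ⊸ G = {z | ∀ f ∈ F, f ⊗ z ∈ G}`. -/
theorem stmt_0 {L : Type*} [MV L] (F G : Set L)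
    (hF : IsLatticeFilter F) (hG : IsLatticeFilter G) (hFG : F ⊆ G) :
    lolli F G = {z : L | ∀ f ∈ F, otimes f z ∈ G} :=
  stmt_0_general F G hF hG
end

section
/- Let F ⊆ G be prime lattice filters of an MV-algebra L. Then F ⊆ J_d(G, K(F)). -/
/-!
If `f ∈ F` were not in `J_d(G, K(F))`, then `¬f ~ g` modulo `K(F)` for some `g` with `¬g ∉ G`,
so `¬g ∉ F`. Since `g → ¬f ∈ K(F)`, the element `(g → ¬f) → ¬g = f ∨ ¬g` lies outside `F`,
which is impossible because `f ≤ f ∨ ¬g` and `F` is upward closed.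
-/

namespace MV

variable {L : Type*} [MV L]

lemma le_join_left (x y : L) : le x (join x y) := by
  unfold le join imp
  rw [add_comm (neg (add (neg x) y)) y, ← add_assoc, add_comm]
  exact neg_add_self _

lemma imp_imp_neg_eq_join_neg (x y : L) : imp (imp y (neg x)) (neg y) = join x (neg y) := by
  unfold join imp
  rw [add_comm (neg y) (neg x)]

theorem subset_Jd_ker {F G : Set L} (hF : ∀ x y, x ∈ F → le x y → y ∈ F) (hFG : F ⊆ G) :
    F ⊆ Jd G (ker F) := by
  rintro f hf ⟨g, hg, -, hg_imp⟩
  have hg_F : neg g ∉ F := fun h => hg (hFG h)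
  apply hg_imp (neg g) hg_F
  rw [imp_imp_neg_eq_join_neg]
  exact hF f _ hf (le_join_left f (neg g))

end MV

open MV
theorem stmt_11_general {L : Type*} [MV L] (F G : Set L)
    (hF : IsPrimeFilter F) (hFG : F ⊆ G) :
    F ⊆ Jd G (ker F) :=
  subset_Jd_ker hF.1.2.1 hFG

/-- For prime lattice filters `F ⊆ G`, `F ⊆ J_d(G, K(F))`. -/
theorem stmt_11 {L : Type*} [MV L] (F G : Set L)
    (hF : IsPrimeFilter F) (hG : IsPrimeFilter G) (hFG : F ⊆ G) :
    F ⊆ Jd G (ker F) :=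
  stmt_11_general F G hF hFG
end
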